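/- Let $t > 0$, $n, n' \geq 0$, and $\gamma_l^+ \in \mathbb{C}$ for $0 \le l \le n$, $\gamma_l^- \in \mathbb{C}$ for $0 \le l \le n'$. Then the product of two time-simplex integrals factorizes as a sum over interlacings: $\Big[\int_{(\mathbb{R}_+)^{n+1}} ds\,\delta(t - \sum_{l=0}^n s_l)\prod_{l=0}^n e^{-is_l\gamma_l^+}\Big]\cdot\Big[\int_{(\mathbb{R}_+)^{n'+1}} ds'\,\delta(t - \sum_{l=0}^{n'} s_l')\prod_{l=0}^{n'} e^{-is_l'\gamma_l^-}\Big] = \sum_{J \text{ interlaces } (n,n')} \int_{(\mathbb{R}_+)^{n+n'+1}} dr\,\delta\big(t - \sum_{j=0}^{n+n'} r_j\big)\prod_{j=0}^{n+n'} e^{-ir_j(\gamma^+_{J_+(j;J)} + \gamma^-_{J_-(j;J)})}$. -/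

import Mathlib

open MeasureTheory Complex Finset

/-- The time-simplex integral with `N+1` variables,
`∫_{(ℝ₊)^{N+1}} ds δ(t - Σ sⱼ) Πⱼ e^{-iγⱼsⱼ}`, defined by integrating out the last
variable via the delta constraint. -/
noncomputable def simplexInt (N : ℕ) (t : ℝ) (γ : Fin (N + 1) → ℂ) : ℂ :=
  ∫ s in {s : Fin N → ℝ | (∀ i, 0 ≤ s i) ∧ ∑ i, s i ≤ t},
    (∏ i : Fin N, Complex.exp (-(I * γ i.castSucc * (s i : ℂ)))) *
      Complex.exp (-(I * γ (Fin.last N) * ((t - ∑ i, s i : ℝ) : ℂ)))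

/-- `J₊(j;J) = Σ_{l=1}^{j} 1(J(l)=+1)` (`0`-indexed: count of `+` among the first `j`
entries of `J`). -/
def Jplus {N : ℕ} (J : Fin N → Bool) (j : ℕ) : ℕ :=
  (Finset.univ.filter fun l : Fin N => (l : ℕ) < j ∧ J l = true).card

/-- `J₋(j;J) = Σ_{l=1}^{j} 1(J(l)=-1)`. -/
def Jminus {N : ℕ} (J : Fin N → Bool) (j : ℕ) : ℕ :=
  (Finset.univ.filter fun l : Fin N => (l : ℕ) < j ∧ J l = false).card

/-!
Let `duhamel N γ t` be the Duhamel iterate `∫₀ᵗ e^{-iγ_N (t-u)} duhamel (N-1) γ u du`.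
Slicing the simplex by the partial sum `u = s₀ + ⋯ + s_{N-1}` shows that it is the
time-simplex integral for `t ≥ 0`, and for `N ≥ 1` it solves `y' = -iγ_N y + duhamel (N-1) γ`,
`y 0 = 0`. If `n, n' ≥ 1`, the product `duhamel n γ⁺ · duhamel n' γ⁻` and the sum over
interlacings therefore solve the same linear equation `y' = -i(γ⁺ₙ + γ⁻ₙ') y + φ`, `y 0 = 0`:
for the sum, splitting according to the last letter of `J` identifies its source term with
that of the product by induction on `n + n'`. If `n = 0` or `n' = 0` there is a single
interlacing and the identity is `duhamel N (γ + a) t = e^{-iat} duhamel N γ t`.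
-/

noncomputable def expPhase (c : ℂ) (x : ℝ) : ℂ := Complex.exp (-(I * c * x))

@[simp]
lemma expPhase_zero (c : ℂ) : expPhase c 0 = 1 := by simp [expPhase]

lemma expPhase_add (c : ℂ) (x y : ℝ) : expPhase c (x + y) = expPhase c x * expPhase c y := by
  simp only [expPhase, ← Complex.exp_add]; push_cast; ring_nf

lemma expPhase_add_left (c d : ℂ) (x : ℝ) : expPhase (c + d) x = expPhase c x * expPhase d x := by
  simp only [expPhase, ← Complex.exp_add]; ring_nf

lemma continuous_expPhase (c : ℂ) : Continuous (expPhase c) := by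
  unfold expPhase; fun_prop

lemma hasDerivAt_expPhase (c : ℂ) (x : ℝ) :
    HasDerivAt (expPhase c) (-(I * c) * expPhase c x) x := by
  have h : expPhase c = fun x : ℝ => cexp (-(I * c) * x) := by
    funext y; simp only [expPhase, neg_mul]
  rw [h]
  exact (((hasDerivAt_id x).ofReal_comp).const_mul (-(I * c))).cexp.congr_deriv (by simp [mul_comm])

noncomputable def duhamel : ℕ → (ℕ → ℂ) → ℝ → ℂ
  | 0, γ, t => expPhase (γ 0) t
  | N + 1, γ, t => ∫ u in (0 : ℝ)..t, expPhase (γ (N + 1)) (t - u) * duhamel N γ u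

lemma duhamel_succ_eq_mul (N : ℕ) (γ : ℕ → ℂ) (t : ℝ) :
    duhamel (N + 1) γ t =
      expPhase (γ (N + 1)) t * ∫ u in (0 : ℝ)..t, expPhase (γ (N + 1)) (-u) * duhamel N γ u := by
  rw [duhamel, ← intervalIntegral.integral_const_mul]
  congr 1 with u
  rw [sub_eq_add_neg, expPhase_add, mul_assoc]

lemma continuous_duhamel (N : ℕ) (γ : ℕ → ℂ) : Continuous (duhamel N γ) := by
  induction N with
  | zero => exact continuous_expPhase _
  | succ N ih =>
    simp only [funext (duhamel_succ_eq_mul N γ)]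
    exact (continuous_expPhase _).mul <| intervalIntegral.continuous_primitive
      (fun a b => (((continuous_expPhase _).comp continuous_neg).mul ih).intervalIntegrable a b) 0

lemma hasDerivAt_duhamel_succ (N : ℕ) (γ : ℕ → ℂ) (t : ℝ) :
    HasDerivAt (duhamel (N + 1) γ) (-(I * γ (N + 1)) * duhamel (N + 1) γ t + duhamel N γ t) t := by
  have hcont : Continuous fun u => expPhase (γ (N + 1)) (-u) * duhamel N γ u :=
    ((continuous_expPhase _).comp continuous_neg).mul (continuous_duhamel N γ)
  have hprim := intervalIntegral.integral_hasDerivAt_right (hcont.intervalIntegrable 0 t)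
    (hcont.stronglyMeasurableAtFilter _ _) hcont.continuousAt
  simp only [funext (duhamel_succ_eq_mul N γ)]
  refine ((hasDerivAt_expPhase (γ (N + 1)) t).mul hprim).congr_deriv ?_
  rw [← mul_assoc (expPhase _ t), ← expPhase_add, add_neg_cancel, expPhase_zero, one_mul]
  ring

lemma duhamel_succ_apply_zero (N : ℕ) (γ : ℕ → ℂ) : duhamel (N + 1) γ 0 = 0 :=
  intervalIntegral.integral_same

lemma duhamel_congr {N : ℕ} {γ γ' : ℕ → ℂ} (h : ∀ j ≤ N, γ j = γ' j) :
    duhamel N γ = duhamel N γ' := by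
  induction N with
  | zero => funext t; simp only [duhamel, h 0 le_rfl]
  | succ N ih =>
    funext t
    simp only [duhamel, h (N + 1) le_rfl, ih fun j hj => h j (hj.trans N.le_succ)]

lemma duhamel_add_const (N : ℕ) (γ : ℕ → ℂ) (a : ℂ) (t : ℝ) :
    duhamel N (fun j => γ j + a) t = expPhase a t * duhamel N γ t := by
  induction N generalizing t with
  | zero => simp only [duhamel, expPhase_add_left, mul_comm]
  | succ N ih =>
    simp only [duhamel, ih, ← intervalIntegral.integral_const_mul]
    congr 1 with u
    rw [expPhase_add_left, ← sub_add_cancel t u, expPhase_add, sub_add_cancel]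
    ring

def timeSimplex (N : ℕ) (t : ℝ) : Set (Fin N → ℝ) := {s | (∀ i, 0 ≤ s i) ∧ ∑ i, s i ≤ t}

lemma isCompact_timeSimplex (N : ℕ) (t : ℝ) : IsCompact (timeSimplex N t) := by
  have hclosed : IsClosed (timeSimplex N t) := by
    simp only [timeSimplex, Set.ofPred_and, Set.ofPred_forall]
    exact (isClosed_iInter fun i => isClosed_le continuous_const (continuous_apply i)).inter
      (isClosed_le (by fun_prop) continuous_const)
  refine (isCompact_Icc (a := 0) (b := fun _ => t)).of_isClosed_subset hclosed fun s ⟨hs, hsum⟩ =>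
    ⟨hs, fun i => (single_le_sum (fun j _ => hs j) (mem_univ i)).trans hsum⟩

lemma sum_snoc_sub_sum {N : ℕ} (s : Fin N → ℝ) (u : ℝ) :
    ∑ i, (Fin.snoc s (u - ∑ i, s i) : Fin (N + 1) → ℝ) i = u := by
  simp [Fin.sum_univ_castSucc]

lemma snoc_sub_sum_mem_timeSimplex_iff {N : ℕ} {s : Fin N → ℝ} {u t : ℝ} :
    (Fin.snoc s (u - ∑ i, s i) : Fin (N + 1) → ℝ) ∈ timeSimplex (N + 1) t ↔
      u ∈ Set.Icc 0 t ∧ s ∈ timeSimplex N u := by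
  simp only [timeSimplex, Set.mem_ofPred_eq, Set.mem_Icc, sum_snoc_sub_sum, Fin.forall_fin_succ',
    Fin.snoc_castSucc, Fin.snoc_last, sub_nonneg]
  constructor
  · rintro ⟨⟨hs, hsum⟩, hut⟩
    exact ⟨⟨(sum_nonneg fun i _ => hs i).trans hsum, hut⟩, hs, hsum⟩
  · rintro ⟨⟨-, hut⟩, hs, hsum⟩
    exact ⟨⟨hs, hsum⟩, hut⟩

lemma measurePreserving_snoc_sub_sum (N : ℕ) :
    MeasurePreserving
      (fun p : (Fin N → ℝ) × ℝ => (Fin.snoc p.1 (p.2 - ∑ i, p.1 i) : Fin (N + 1) → ℝ)) := by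
  have hshear : MeasurePreserving (fun p : (Fin N → ℝ) × ℝ => (p.1, p.2 - ∑ i, p.1 i))
      (volume.prod volume) (volume.prod volume) :=
    (MeasurePreserving.id volume).skew_product (by fun_prop)
      (Filter.Eventually.of_forall fun s => (measurePreserving_sub_right volume _).map_eq)
  have hsnoc : MeasurePreserving (fun q : (Fin N → ℝ) × ℝ => (Fin.snoc q.1 q.2 : Fin (N + 1) → ℝ))
      (volume.prod volume) volume := by
    have := (volume_preserving_piFinSuccAbove (fun _ : Fin (N + 1) => ℝ) (Fin.last N)).symm.comp
      Measure.measurePreserving_swap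
    simpa only [Function.comp_def, MeasurableEquiv.piFinSuccAbove_symm_apply, Fin.insertNthEquiv,
      Equiv.coe_fn_mk, Fin.insertNth_last', Prod.fst_swap, Prod.snd_swap] using this
  exact hsnoc.comp hshear

lemma measurableEmbedding_snoc_sub_sum (N : ℕ) :
    MeasurableEmbedding
      (fun p : (Fin N → ℝ) × ℝ => (Fin.snoc p.1 (p.2 - ∑ i, p.1 i) : Fin (N + 1) → ℝ)) := by
  refine .of_measurable_inverse (g := fun s => (Fin.init s, ∑ i, s i))
    (measurePreserving_snoc_sub_sum N).measurable ?_ (by unfold Fin.init; fun_prop)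
    fun p => by simp only [Fin.init_snoc, sum_snoc_sub_sum]
  rw [Set.range_eq_univ.2 fun s => ⟨(Fin.init s, ∑ i, s i), by simp [Fin.sum_univ_castSucc, Fin.init]⟩]
  exact .univ

theorem setIntegral_timeSimplex_succ {E : Type*} [NormedAddCommGroup E] [NormedSpace ℝ E]
    {N : ℕ} {t : ℝ} {F : (Fin (N + 1) → ℝ) → E} (hF : IntegrableOn F (timeSimplex (N + 1) t)) :
    ∫ s in timeSimplex (N + 1) t, F s =
      ∫ u in Set.Icc 0 t, ∫ s in timeSimplex N u, F (Fin.snoc s (u - ∑ i, s i)) := by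
  have hΦ := measurePreserving_snoc_sub_sum N
  have hemb := measurableEmbedding_snoc_sub_sum N
  have hS := (isCompact_timeSimplex (N + 1) t).measurableSet
  have hslice : ∀ u, ∫ s, (timeSimplex (N + 1) t).indicator F (Fin.snoc s (u - ∑ i, s i)) =
      (Set.Icc 0 t).indicator
        (fun u => ∫ s in timeSimplex N u, F (Fin.snoc s (u - ∑ i, s i))) u := by
    intro u
    by_cases hu : u ∈ Set.Icc 0 t
    · rw [Set.indicator_of_mem hu, ← integral_indicator (isCompact_timeSimplex N u).measurableSet]
      congr with s
      by_cases hs : s ∈ timeSimplex N u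
      · rw [Set.indicator_of_mem hs,
          Set.indicator_of_mem (snoc_sub_sum_mem_timeSimplex_iff.mpr ⟨hu, hs⟩)]
      · rw [Set.indicator_of_notMem hs,
          Set.indicator_of_notMem fun h => hs (snoc_sub_sum_mem_timeSimplex_iff.mp h).2]
    · simp [snoc_sub_sum_mem_timeSimplex_iff, hu]
  calc ∫ s in timeSimplex (N + 1) t, F s
      = ∫ s, (timeSimplex (N + 1) t).indicator F s := (integral_indicator hS).symm
    _ = ∫ p : (Fin N → ℝ) × ℝ, (timeSimplex (N + 1) t).indicator F
          (Fin.snoc p.1 (p.2 - ∑ i, p.1 i)) := (hΦ.integral_comp hemb _).symm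
    _ = ∫ u, ∫ s, (timeSimplex (N + 1) t).indicator F (Fin.snoc s (u - ∑ i, s i)) :=
      integral_prod_symm _ ((hΦ.integrable_comp_emb hemb).mpr (hF.integrable_indicator hS))
    _ = _ := by simp only [hslice, integral_indicator measurableSet_Icc]

lemma simplexInt_eq_setIntegral (N : ℕ) (t : ℝ) (γ : Fin (N + 1) → ℂ) :
    simplexInt N t γ = ∫ s in timeSimplex N t,
      (∏ i : Fin N, expPhase (γ i.castSucc) (s i)) * expPhase (γ (Fin.last N)) (t - ∑ i, s i) :=
  rfl

lemma simplexInt_succ (N : ℕ) (t : ℝ) (γ : ℕ → ℂ) :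
    simplexInt (N + 1) t (fun l => γ l) =
      ∫ u in Set.Icc 0 t, expPhase (γ (N + 1)) (t - u) * simplexInt N u (fun l => γ l) := by
  have hint : IntegrableOn (fun s : Fin (N + 1) → ℝ =>
      (∏ i : Fin (N + 1), expPhase (γ i) (s i)) * expPhase (γ (N + 1)) (t - ∑ i, s i))
      (timeSimplex (N + 1) t) :=
    ContinuousOn.integrableOn_compact (isCompact_timeSimplex _ _) (by unfold expPhase; fun_prop)
  rw [simplexInt_eq_setIntegral]
  simp only [Fin.val_castSucc, Fin.val_last]
  rw [setIntegral_timeSimplex_succ hint]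
  congr 1 with u
  rw [simplexInt_eq_setIntegral, ← integral_const_mul]
  congr 1 with s
  simp only [Fin.prod_univ_castSucc, Fin.snoc_castSucc, Fin.snoc_last, sum_snoc_sub_sum,
    Fin.val_castSucc, Fin.val_last]
  ring

lemma simplexInt_eq_duhamel (N : ℕ) (γ : ℕ → ℂ) {t : ℝ} (ht : 0 ≤ t) :
    simplexInt N t (fun l => γ l) = duhamel N γ t := by
  induction N generalizing t with
  | zero =>
    have huniv : timeSimplex 0 t = Set.univ := by simp [timeSimplex, ht]
    simp [simplexInt_eq_setIntegral, huniv, duhamel, Measure.real, volume_pi]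
  | succ N ih =>
    rw [simplexInt_succ, integral_Icc_eq_integral_Ioc, ← intervalIntegral.integral_of_le ht,
      duhamel]
    refine intervalIntegral.integral_congr fun u hu => ?_
    rw [Set.uIcc_of_le ht] at hu
    simp only [ih hu.1]

def interlacings (M n : ℕ) : Finset (Fin M → Bool) :=
  Finset.univ.filter fun J : Fin M → Bool => (Finset.univ.filter fun l => J l = true).card = n

section Interlacing

variable (γp γm : ℕ → ℂ)

def interlacedPhase {M : ℕ} (J : Fin M → Bool) (j : ℕ) : ℂ :=
  γp (Jplus J j) + γm (Jminus J j)

lemma Jplus_snoc {K : ℕ} (J : Fin K → Bool) (c : Bool) {j : ℕ} (hj : j ≤ K) :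
    Jplus (Fin.snoc J c : Fin (K + 1) → Bool) j = Jplus J j := by
  simp only [Jplus, card_filter, Fin.sum_univ_castSucc, Fin.snoc_castSucc, Fin.snoc_last,
    Fin.val_castSucc, Fin.val_last, hj.not_gt, false_and, if_false, add_zero]

lemma Jminus_snoc {K : ℕ} (J : Fin K → Bool) (c : Bool) {j : ℕ} (hj : j ≤ K) :
    Jminus (Fin.snoc J c : Fin (K + 1) → Bool) j = Jminus J j := by
  simp only [Jminus, card_filter, Fin.sum_univ_castSucc, Fin.snoc_castSucc, Fin.snoc_last,
    Fin.val_castSucc, Fin.val_last, hj.not_gt, false_and, if_false, add_zero]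

lemma interlacedPhase_snoc {K : ℕ} (J : Fin K → Bool) (c : Bool) {j : ℕ}
    (hj : j ≤ K) :
    interlacedPhase γp γm (Fin.snoc J c : Fin (K + 1) → Bool) j = interlacedPhase γp γm J j := by
  rw [interlacedPhase, interlacedPhase, Jplus_snoc J c hj, Jminus_snoc J c hj]

lemma interlacedPhase_of_mem_interlacings {M n : ℕ} {J : Fin M → Bool}
    (hJ : J ∈ interlacings M n) : interlacedPhase γp γm J M = γp n + γm (M - n) := by
  have hn := (mem_filter.mp hJ).2
  have hplus : Jplus J M = n := by
    rw [← hn, Jplus]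
    simp only [Fin.is_lt, true_and]
  have hcard := card_filter_add_card_filter_not (s := univ) (p := fun l : Fin M => J l = true)
  simp only [card_univ, Fintype.card_fin, Bool.not_eq_true] at hcard
  have hminus : Jminus J M = M - n := by
    rw [Jminus]
    simp only [Fin.is_lt, true_and]
    omega
  rw [interlacedPhase, hplus, hminus]

lemma card_filter_snoc_eq_true {K : ℕ} (J : Fin K → Bool) (c : Bool) :
    (univ.filter fun l => (Fin.snoc J c : Fin (K + 1) → Bool) l = true).card =
      (univ.filter fun l => J l = true).card + c.toNat := by
  simp only [card_filter, Fin.sum_univ_castSucc, Fin.snoc_castSucc, Fin.snoc_last]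
  cases c <;> rfl

lemma sum_boolTuple_succ {β : Type*} [AddCommMonoid β] {K : ℕ} (g : (Fin (K + 1) → Bool) → β) :
    ∑ J, g J = ∑ J : Fin K → Bool, (g (Fin.snoc J true) + g (Fin.snoc J false)) := by
  rw [← (Fin.snocEquiv fun _ => Bool).sum_comp, Fintype.sum_prod_type_right]
  simp only [Fintype.sum_bool]
  rfl

lemma sum_interlacings_succ_succ {β : Type*} [AddCommMonoid β] {K n : ℕ}
    (f : (Fin (K + 1) → Bool) → β) :
    ∑ J ∈ interlacings (K + 1) (n + 1), f J =
      ∑ J ∈ interlacings K n, f (Fin.snoc J true) +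
        ∑ J ∈ interlacings K (n + 1), f (Fin.snoc J false) := by
  simp only [interlacings, sum_filter, sum_boolTuple_succ, card_filter_snoc_eq_true,
    Bool.toNat_true, Bool.toNat_false, add_zero, add_left_inj, sum_add_distrib]

lemma interlacings_zero (M : ℕ) : interlacings M 0 = {fun _ => false} := by
  ext J
  simp [interlacings, filter_eq_empty_iff, funext_iff]

lemma interlacings_self (M : ℕ) : interlacings M M = {fun _ => true} := by
  ext J
  simp only [interlacings, mem_filter, mem_univ, true_and, mem_singleton]
  constructor
  · intro h
    funext l
    exact filter_eq_self.mp (eq_univ_of_card _ (by simpa using h)) l (mem_univ l)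
  · rintro rfl
    simp

lemma interlacedPhase_const_false {M j : ℕ} (hj : j ≤ M) :
    interlacedPhase γp γm (fun _ : Fin M => false) j = γm j + γp 0 := by
  simp [interlacedPhase, Jplus, Jminus, Fin.card_filter_val_lt, hj, add_comm]

lemma interlacedPhase_const_true {M j : ℕ} (hj : j ≤ M) :
    interlacedPhase γp γm (fun _ : Fin M => true) j = γp j + γm 0 := by
  simp [interlacedPhase, Jplus, Jminus, Fin.card_filter_val_lt, hj]

lemma eq_of_hasDerivAt_linear {c : ℂ} {φ f g : ℝ → ℂ} (hf : ∀ t, HasDerivAt f (c * f t + φ t) t)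
    (hg : ∀ t, HasDerivAt g (c * g t + φ t) t) (h0 : f 0 = g 0) : f = g := by
  have hlip : ∀ t, LipschitzWith ‖c‖₊ fun y => c * y + φ t := fun t =>
    lipschitzWith_iff_dist_le_mul.2 fun x y => by simp [dist_eq_norm, ← mul_sub]
  exact ODE_solution_unique_univ (s := fun _ => Set.univ) (fun t => (hlip t).lipschitzOnWith)
    (fun t => ⟨hf t, trivial⟩) (fun t => ⟨hg t, trivial⟩) h0

lemma duhamel_zero_mul (M : ℕ) (t : ℝ) :
    duhamel 0 γp t * duhamel M γm t =
      ∑ J ∈ interlacings M 0, duhamel M (interlacedPhase γp γm J) t := by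
  rw [interlacings_zero, sum_singleton,
    duhamel_congr fun j hj => interlacedPhase_const_false γp γm hj, duhamel_add_const]
  rfl

lemma duhamel_mul_zero (M : ℕ) (t : ℝ) :
    duhamel M γp t * duhamel 0 γm t =
      ∑ J ∈ interlacings M M, duhamel M (interlacedPhase γp γm J) t := by
  rw [interlacings_self, sum_singleton,
    duhamel_congr fun j hj => interlacedPhase_const_true γp γm hj, duhamel_add_const, mul_comm]
  rfl

lemma duhamel_interlacedPhase_snoc {K : ℕ} (J : Fin K → Bool) (c : Bool) :
    duhamel K (interlacedPhase γp γm (Fin.snoc J c : Fin (K + 1) → Bool)) =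
      duhamel K (interlacedPhase γp γm J) :=
  duhamel_congr fun _ hj => interlacedPhase_snoc γp γm J c hj

lemma duhamel_succ_mul_succ {K a b : ℕ} (hK : a + 1 + (b + 1) = K + 1)
    (ih_left : ∀ t, duhamel a γp t * duhamel (b + 1) γm t =
      ∑ J ∈ interlacings K a, duhamel K (interlacedPhase γp γm J) t)
    (ih_right : ∀ t, duhamel (a + 1) γp t * duhamel b γm t =
      ∑ J ∈ interlacings K (a + 1), duhamel K (interlacedPhase γp γm J) t)
    (t : ℝ) :
    duhamel (a + 1) γp t * duhamel (b + 1) γm t =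
      ∑ J ∈ interlacings (K + 1) (a + 1), duhamel (K + 1) (interlacedPhase γp γm J) t := by
  let c := -(I * (γp (a + 1) + γm (b + 1)))
  let φ t := duhamel a γp t * duhamel (b + 1) γm t + duhamel (a + 1) γp t * duhamel b γm t
  let P t := duhamel (a + 1) γp t * duhamel (b + 1) γm t
  let S t := ∑ J ∈ interlacings (K + 1) (a + 1), duhamel (K + 1) (interlacedPhase γp γm J) t
  have hP : ∀ t, HasDerivAt P (c * P t + φ t) t := fun t =>
    ((hasDerivAt_duhamel_succ a γp t).mul (hasDerivAt_duhamel_succ b γm t)).congr_deriv (by ring)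
  have hS : ∀ t, HasDerivAt S (c * S t + φ t) t := by
    intro t
    refine (HasDerivAt.fun_sum fun J _ => hasDerivAt_duhamel_succ K _ t).congr_deriv ?_
    rw [sum_add_distrib, mul_sum]
    congr 1
    · refine sum_congr rfl fun J hJ => ?_
      rw [interlacedPhase_of_mem_interlacings γp γm hJ, show K + 1 - (a + 1) = b + 1 by omega]
    · simp only [sum_interlacings_succ_succ, duhamel_interlacedPhase_snoc, φ, ih_left, ih_right]
  exact congrFun (eq_of_hasDerivAt_linear hP hS (by simp [P, S, duhamel_succ_apply_zero])) t

theorem duhamel_mul_eq_sum_interlacings {M n n' : ℕ} (h : n + n' = M) (t : ℝ) :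
    duhamel n γp t * duhamel n' γm t =
      ∑ J ∈ interlacings M n, duhamel M (interlacedPhase γp γm J) t := by
  induction M generalizing n n' t with
  | zero =>
    obtain ⟨rfl, rfl⟩ : n = 0 ∧ n' = 0 := by omega
    exact duhamel_zero_mul γp γm 0 t
  | succ K ih =>
    rcases n with _ | a
    · obtain rfl : n' = K + 1 := by omega
      exact duhamel_zero_mul γp γm _ t
    rcases n' with _ | b
    · obtain rfl : a = K := by omega
      exact duhamel_mul_zero γp γm _ t
    exact duhamel_succ_mul_succ γp γm h (ih (by omega)) (ih (by omega)) t

end Interlacing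

/-- interlacing of Duhamel expansions.  The product of two time-simplex
integrals over `[0,t]` with phases `γ⁺₀,…,γ⁺ₙ` and `γ⁻₀,…,γ⁻ₙ'` equals the sum over
all maps `J : {1,…,n+n'} → {±1}` interlacing `(n,n')` (i.e. with exactly `n` values
`+1`) of the time-simplex integral with `n+n'+1` variables and phases
`γ⁺_{J₊(j;J)} + γ⁻_{J₋(j;J)}`. -/
theorem stmt_7 (n n' : ℕ) (t : ℝ) (ht : 0 < t) (γp γm : ℕ → ℂ) :
    simplexInt n t (fun l => γp (l : ℕ)) * simplexInt n' t (fun l => γm (l : ℕ))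
      = ∑ J ∈ Finset.univ.filter
            (fun J : Fin (n + n') → Bool =>
              (Finset.univ.filter fun l => J l = true).card = n),
          simplexInt (n + n') t
            (fun j => γp (Jplus J (j : ℕ)) + γm (Jminus J (j : ℕ))) := by
  rw [simplexInt_eq_duhamel n γp ht.le, simplexInt_eq_duhamel n' γm ht.le,
    duhamel_mul_eq_sum_interlacings γp γm rfl t]
  exact sum_congr rfl fun J _ => (simplexInt_eq_duhamel _ (interlacedPhase γp γm J) ht.le).symm
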